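/- If a semiring S, viewed as a left S-semimodule over itself, satisfies the ascending chain condition on direct summands, then S = S₁ ⊕ ⋯ ⊕ Sₙ is a finite direct sum of left ideals Sᵢ each of which is an irreducible summand. -/

import Mathlib

section DirectSumDefs

variable {S : Type*} [Semiring S] {M : Type*} [AddCommMonoid M] [Module S M]

/-- `N` is the internal direct sum of its subsemimodules `K` and `L`: every element
of `N` is uniquely a sum of an element of `K` and an element of `L`. -/
def IsDirectSumOf (N K L : Submodule S M) : Prop :=
  K ≤ N ∧ L ≤ N ∧ (∀ m ∈ N, ∃ k ∈ K, ∃ l ∈ L, m = k + l) ∧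
    ∀ k k' l l' : M, k ∈ K → k' ∈ K → l ∈ L → l' ∈ L → k + l = k' + l' →
      k = k' ∧ l = l'

/-- `N` is a direct summand of `M`, i.e. `M = N ⊕ N'` for some subsemimodule `N'`. -/
def IsDirectSummand (N : Submodule S M) : Prop :=
  ∃ N' : Submodule S M, IsDirectSumOf ⊤ N N'

end DirectSumDefs

/-- A direct summand `N` of `M` is an irreducible summand iff `{0}` is a maximal
summand of `N`, i.e. `N ≠ 0` and `N` has no non-trivial direct summands. -/
def IsIrreducibleSummand {S : Type*} [Semiring S] {M : Type*} [AddCommMonoid M]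
    [Module S M] (N : Submodule S M) : Prop :=
  IsDirectSummand N ∧ N ≠ ⊥ ∧
    ∀ L L' : Submodule S M, IsDirectSumOf N L L' → L = ⊥ ∨ L = N

/-
The ascending chain condition makes the direct summands of `M` well-founded under `>`, so we may
argue by induction downward from `M`: let `N` be a summand with complement `N'`, and assume that
the complement of every strictly larger summand is a finite direct sum of irreducible summands.
If `N'` is zero or irreducible we are done. Otherwise `N' = L ⊕ L'` with `L, L'` nonzero; then
`N ⊕ L'` and `N ⊕ L` are summands strictly above `N` with complements `L` and `L'`, so both are
finite direct sums of irreducible summands, hence so is `N'`. Take `N = 0`.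
-/

section Decomposition

variable {S M : Type*} [Semiring S] [AddCommMonoid M] [Module S M]

namespace IsDirectSumOf

variable {P N N' A B : Submodule S M}

theorem symm (h : IsDirectSumOf P N N') : IsDirectSumOf P N' N := by
  obtain ⟨hN, hN', hspan, huniq⟩ := h
  refine ⟨hN', hN, fun m hm => ?_, fun l l' k k' hl hl' hk hk' e => ?_⟩
  · obtain ⟨k, hk, l, hl, rfl⟩ := hspan m hm
    exact ⟨l, hl, k, hk, add_comm k l⟩
  · rw [add_comm l, add_comm l'] at e
    exact (huniq k k' l l' hk hk' hl hl' e).symm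

theorem eq_zero_of_mem (h : IsDirectSumOf P N N') {x : M} (hN : x ∈ N) (hN' : x ∈ N') :
    x = 0 :=
  (h.2.2.2 x 0 0 x hN N.zero_mem N'.zero_mem hN' (by rw [add_zero, zero_add])).1

theorem eq_of_right_eq_bot (h : IsDirectSumOf P N ⊥) : N = P := by
  refine le_antisymm h.1 fun x hx => ?_
  obtain ⟨k, hk, l, hl, rfl⟩ := h.2.2.1 x hx
  rw [(Submodule.mem_bot S).mp hl, add_zero]
  exact hk

theorem sup_left (h : IsDirectSumOf P N N') (h' : IsDirectSumOf N' A B) :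
    IsDirectSumOf P (N ⊔ A) B := by
  refine ⟨sup_le h.1 (h'.1.trans h.2.1), h'.2.1.trans h.2.1, fun x hx => ?_, ?_⟩
  · obtain ⟨k, hk, l, hl, rfl⟩ := h.2.2.1 x hx
    obtain ⟨a, ha, b, hb, rfl⟩ := h'.2.2.1 l hl
    exact ⟨k + a, Submodule.add_mem_sup hk ha, b, hb, (add_assoc k a b).symm⟩
  · intro x x' b b' hx hx' hb hb' e
    obtain ⟨k, hk, a, ha, rfl⟩ := Submodule.mem_sup.mp hx
    obtain ⟨k', hk', a', ha', rfl⟩ := Submodule.mem_sup.mp hx'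
    rw [add_assoc, add_assoc] at e
    obtain ⟨rfl, hab⟩ := h.2.2.2 k k' (a + b) (a' + b') hk hk'
      (N'.add_mem (h'.1 ha) (h'.2.1 hb)) (N'.add_mem (h'.1 ha') (h'.2.1 hb')) e
    obtain ⟨rfl, rfl⟩ := h'.2.2.2 a a' b b' ha ha' hb hb' hab
    exact ⟨rfl, rfl⟩

theorem lt_sup (h : IsDirectSumOf P N N') (hA : A ≤ N') (hA₀ : A ≠ ⊥) : N < N ⊔ A := by
  refine lt_of_le_of_ne le_sup_left fun heq => ?_
  obtain ⟨a, haA, ha₀⟩ := (Submodule.ne_bot_iff A).mp hA₀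
  exact ha₀ (h.eq_zero_of_mem (heq ▸ Submodule.mem_sup_right haA) (hA haA))

end IsDirectSumOf

theorem isDirectSumOf_top_bot_top : IsDirectSumOf (⊤ : Submodule S M) ⊥ ⊤ := by
  refine ⟨bot_le, le_rfl, fun m _ => ⟨0, zero_mem _, m, trivial, (zero_add m).symm⟩, ?_⟩
  intro k k' l l' hk hk' _ _ e
  rw [Submodule.mem_bot] at hk hk'
  subst hk hk'
  exact ⟨rfl, by simpa using e⟩

theorem IsDirectSummand.exists_isDirectSumOf_of_not_isIrreducibleSummand {N : Submodule S M}
    (hN : IsDirectSummand N) (hN₀ : N ≠ ⊥) (hirr : ¬IsIrreducibleSummand N) :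
    ∃ L L' : Submodule S M, IsDirectSumOf N L L' ∧ L ≠ ⊥ ∧ L' ≠ ⊥ := by
  simp only [IsIrreducibleSummand, not_and, not_forall, not_or] at hirr
  obtain ⟨L, L', h, hL₀, hLN⟩ := hirr hN hN₀
  refine ⟨L, L', h, hL₀, fun hL' => hLN ?_⟩
  exact (hL' ▸ h).eq_of_right_eq_bot

/-- Without additive cancellation, independence of the `g i` would not give unique
decompositions, so uniqueness is required outright. -/
structure IsInternalSumOf {ι : Type*} [Fintype ι] (N : Submodule S M)
    (g : ι → Submodule S M) : Prop where
  le : ∀ i, g i ≤ N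
  exists_sum_eq : ∀ x ∈ N, ∃ c : ι → M, (∀ i, c i ∈ g i) ∧ ∑ i, c i = x
  eq_of_sum_eq : ∀ c c' : ι → M, (∀ i, c i ∈ g i) → (∀ i, c' i ∈ g i) →
    ∑ i, c i = ∑ i, c' i → c = c'

namespace IsInternalSumOf

variable {ι κ : Type*} [Fintype ι] [Fintype κ]

theorem bot (g : ι → Submodule S M) [IsEmpty ι] : IsInternalSumOf ⊥ g where
  le i := isEmptyElim i
  exists_sum_eq x hx := ⟨isEmptyElim, isEmptyElim, by simp [(Submodule.mem_bot S).mp hx]⟩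
  eq_of_sum_eq _ _ _ _ _ := funext isEmptyElim

theorem self (N : Submodule S M) [Unique ι] : IsInternalSumOf N fun _ : ι => N where
  le _ := le_rfl
  exists_sum_eq x hx := ⟨fun _ => x, fun _ => hx, by simp⟩
  eq_of_sum_eq c c' _ _ e := funext fun i => by simpa [Unique.eq_default i] using e

theorem comp_equiv {N : Submodule S M} {g : ι → Submodule S M} (h : IsInternalSumOf N g)
    (e : κ ≃ ι) : IsInternalSumOf N (g ∘ e) where
  le i := h.le (e i)
  exists_sum_eq x hx := by
    obtain ⟨c, hc, rfl⟩ := h.exists_sum_eq x hx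
    exact ⟨c ∘ e, fun i => hc (e i), e.sum_comp c⟩
  eq_of_sum_eq c c' hc hc' hsum := by
    have := h.eq_of_sum_eq (c ∘ e.symm) (c' ∘ e.symm) (fun i => by simpa using hc (e.symm i))
      (fun i => by simpa using hc' (e.symm i))
      (show ∑ i, c (e.symm i) = ∑ i, c' (e.symm i) by
        rwa [e.symm.sum_comp c, e.symm.sum_comp c'])
    funext i
    simpa using congrFun this (e i)

theorem sumElim {N K L : Submodule S M} {g₁ : ι → Submodule S M} {g₂ : κ → Submodule S M}
    (h : IsDirectSumOf N K L) (h₁ : IsInternalSumOf K g₁) (h₂ : IsInternalSumOf L g₂) :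
    IsInternalSumOf N (Sum.elim g₁ g₂) where
  le := Sum.rec (fun i => (h₁.le i).trans h.1) (fun i => (h₂.le i).trans h.2.1)
  exists_sum_eq x hx := by
    obtain ⟨k, hk, l, hl, rfl⟩ := h.2.2.1 x hx
    obtain ⟨c₁, hc₁, rfl⟩ := h₁.exists_sum_eq k hk
    obtain ⟨c₂, hc₂, rfl⟩ := h₂.exists_sum_eq l hl
    exact ⟨Sum.elim c₁ c₂, Sum.rec hc₁ hc₂, Fintype.sum_sum_type _⟩
  eq_of_sum_eq c c' hc hc' hsum := by
    rw [Fintype.sum_sum_type, Fintype.sum_sum_type] at hsum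
    have mem₁ (d : ι ⊕ κ → M) (hd : ∀ i, d i ∈ Sum.elim g₁ g₂ i) :
        ∑ i, d (.inl i) ∈ K :=
      K.sum_mem fun i _ => h₁.le i (hd (.inl i))
    have mem₂ (d : ι ⊕ κ → M) (hd : ∀ i, d i ∈ Sum.elim g₁ g₂ i) :
        ∑ i, d (.inr i) ∈ L :=
      L.sum_mem fun i _ => h₂.le i (hd (.inr i))
    obtain ⟨e₁, e₂⟩ :=
      h.2.2.2 _ _ _ _ (mem₁ c hc) (mem₁ c' hc') (mem₂ c hc) (mem₂ c' hc') hsum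
    have q₁ := h₁.eq_of_sum_eq _ _ (fun i => hc (.inl i)) (fun i => hc' (.inl i)) e₁
    have q₂ := h₂.eq_of_sum_eq _ _ (fun i => hc (.inr i)) (fun i => hc' (.inr i)) e₂
    funext i
    cases i with
    | inl i => exact congrFun q₁ i
    | inr i => exact congrFun q₂ i

theorem isInternal [DecidableEq ι] {g : ι → Submodule S M} (h : IsInternalSumOf ⊤ g) :
    DirectSum.IsInternal g := by
  have coe_apply (z : DirectSum ι fun i => g i) :
      DirectSum.coeAddMonoidHom g z = ∑ i, (z i : M) := by
    conv_lhs => rw [← DirectSum.sum_univ_of z]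
    simp [map_sum, DirectSum.coeAddMonoidHom_of]
  refine ⟨fun x y hxy => ?_, fun x => ?_⟩
  · have := h.eq_of_sum_eq (fun i => x i) (fun i => y i) (fun i => (x i).2) (fun i => (y i).2)
      (by rw [← coe_apply, ← coe_apply, hxy])
    exact DFinsupp.ext fun i => Subtype.ext (congrFun this i)
  · obtain ⟨c, hc, rfl⟩ := h.exists_sum_eq x trivial
    refine ⟨∑ i, DirectSum.of (fun i => g i) i ⟨c i, hc i⟩, ?_⟩
    simp [map_sum, DirectSum.coeAddMonoidHom_of]

end IsInternalSumOf

def IsFiniteSumOfIrreducibleSummands (N : Submodule S M) : Prop :=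
  ∃ (n : ℕ) (g : Fin n → Submodule S M),
    IsInternalSumOf N g ∧ ∀ i, IsIrreducibleSummand (g i)

namespace IsFiniteSumOfIrreducibleSummands

theorem bot : IsFiniteSumOfIrreducibleSummands (⊥ : Submodule S M) :=
  ⟨0, finZeroElim, .bot _, finZeroElim⟩

theorem of_isIrreducibleSummand {N : Submodule S M} (h : IsIrreducibleSummand N) :
    IsFiniteSumOfIrreducibleSummands N :=
  ⟨1, fun _ => N, .self N, fun _ => h⟩

theorem of_isDirectSumOf {N K L : Submodule S M} (h : IsDirectSumOf N K L)
    (hK : IsFiniteSumOfIrreducibleSummands K) (hL : IsFiniteSumOfIrreducibleSummands L) :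
    IsFiniteSumOfIrreducibleSummands N := by
  obtain ⟨m, g₁, h₁, hirr₁⟩ := hK
  obtain ⟨n, g₂, h₂, hirr₂⟩ := hL
  have hirr : ∀ j, IsIrreducibleSummand (Sum.elim g₁ g₂ j) := Sum.rec hirr₁ hirr₂
  exact ⟨m + n, Sum.elim g₁ g₂ ∘ finSumFinEquiv.symm,
    (h₁.sumElim h h₂).comp_equiv _, fun i => hirr _⟩

end IsFiniteSumOfIrreducibleSummands

theorem wellFoundedGT_isDirectSummand_of_acc
    (hacc : ∀ f : ℕ → Submodule S M, (∀ n, IsDirectSummand (f n)) →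
      (∀ n, f n ≤ f (n + 1)) → ∃ n, ∀ m, n ≤ m → f m = f n) :
    WellFoundedGT {N : Submodule S M // IsDirectSummand N} := by
  refine wellFoundedGT_iff_monotone_chain_condition.mpr fun f => ?_
  obtain ⟨n, hn⟩ := hacc (fun n => f n) (fun n => (f n).2) fun n => f.mono n.le_succ
  exact ⟨n, fun m hm => Subtype.ext (hn m hm).symm⟩

theorem isFiniteSumOfIrreducibleSummands_of_isDirectSumOf_top
    [WellFoundedGT {N : Submodule S M // IsDirectSummand N}] {N N' : Submodule S M}
    (h : IsDirectSumOf ⊤ N N') : IsFiniteSumOfIrreducibleSummands N' := by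
  suffices ∀ N : {N : Submodule S M // IsDirectSummand N}, ∀ N', IsDirectSumOf ⊤ N.1 N' →
      IsFiniteSumOfIrreducibleSummands N' from this ⟨N, N', h⟩ N' h
  intro N
  induction N using WellFoundedGT.induction with
  | _ N ih =>
    intro N' h
    by_cases hN₀ : N' = ⊥
    · exact hN₀ ▸ .bot
    by_cases hirr : IsIrreducibleSummand N'
    · exact .of_isIrreducibleSummand hirr
    obtain ⟨L, L', hLL', hL₀, hL'₀⟩ :=
      IsDirectSummand.exists_isDirectSumOf_of_not_isIrreducibleSummand ⟨N, h.symm⟩ hN₀ hirr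
    have hL := h.sup_left hLL'.symm
    have hL' := h.sup_left hLL'
    exact .of_isDirectSumOf hLL' (ih ⟨_, L, hL⟩ (h.lt_sup hLL'.2.1 hL'₀) L hL)
      (ih ⟨_, L', hL'⟩ (h.lt_sup hLL'.1 hL₀) L' hL')

end Decomposition

/-- If `S`, as a left `S`-semimodule over itself, satisfies the ACC on direct
summands, then `S = S₁ ⊕ ⋯ ⊕ Sₙ` is a finite direct sum of left ideals each of
which is an irreducible summand. -/
theorem decomposition_into_irreducible_summands_of_acc
    {S : Type*} [Semiring S]
    (hacc : ∀ f : ℕ → Submodule S S, (∀ n, IsDirectSummand (f n)) →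
      (∀ n, f n ≤ f (n + 1)) → ∃ n, ∀ m, n ≤ m → f m = f n) :
    ∃ (n : ℕ) (Si : Fin n → Submodule S S),
      DirectSum.IsInternal Si ∧ ∀ i, IsIrreducibleSummand (Si i) := by
  have := wellFoundedGT_isDirectSummand_of_acc hacc
  obtain ⟨n, g, hg, hirr⟩ := isFiniteSumOfIrreducibleSummands_of_isDirectSumOf_top
    (isDirectSumOf_top_bot_top (S := S) (M := S))
  exact ⟨n, g, hg.isInternal, hirr⟩
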